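/- arXiv:2211.12731 — 6 statements merged into one kernel-verified Lean document; each statement's English description precedes it below -/
import Mathlib

section
/- Let $h_1 \le h_2 \le \cdots \le h_n$ be positive reals and $r \le n$ a positive integer with $(r)h_n \ge \sum_{i=1}^n h_i$ possibly failing. Define $k = \min\{ s \mid 0 \le s \le r,\ (r-s) h_{n-s} < \sum_{i=1}^{n-s} h_i \}$ (assuming such an $s$ exists) and $M = \frac{1}{r-k}\sum_{i=1}^{n-k} h_i$. Then $h_{n-k} < M \le h_{n-k+1}$ (with the convention $h_{n+1} = \infty$), and consequently the probabilities $\pi_i = r \frac{h_i \wedge M}{\sum_{j=1}^n (h_j \wedge M)}$ satisfy $0 < \pi_i \le 1$ for all $i$ and $\sum_{i=1}^n \pi_i = r$. -/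
/-!
Below the cut `n - k` every `h i` is at most `h (n - k) < M`, and above it every `h i` is at least
`h (n - k + 1) ≥ M`, the latter being the failure of the defining inequality at `s = k - 1`.
Hence `∑ j, h j ⊓ M = ∑_{i ≤ n-k} h i + k M = (r - k) M + k M = r M`,
so `π i = (h i ⊓ M) / M`, which lies in `(0, 1]`, and the `π i` sum to `r`.
-/

open Finset

theorem sum_Icc_min_eq_of_le_of_ge {h : ℕ → ℝ} {M : ℝ} {m n : ℕ} (hmn : m ≤ n)
    (hlow : ∀ i ∈ Icc 1 m, h i ≤ M) (hhigh : ∀ i ∈ Icc (m + 1) n, M ≤ h i) :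
    ∑ i ∈ Icc 1 n, min (h i) M = ∑ i ∈ Icc 1 m, h i + (n - m : ℕ) * M := by
  have hsplit : ∑ i ∈ Ioc 0 n, min (h i) M =
      ∑ i ∈ Ioc 0 m, min (h i) M + ∑ i ∈ Ioc m n, min (h i) M :=
    (sum_Ioc_consecutive _ (Nat.zero_le m) hmn).symm
  simp only [← Icc_add_one_left_eq_Ioc, zero_add] at hsplit
  rw [hsplit, sum_congr rfl fun i hi => min_eq_left (hlow i hi),
    sum_congr rfl fun i hi => min_eq_right (hhigh i hi), sum_const, Nat.card_Icc, nsmul_eq_mul,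
    Nat.add_sub_add_right]

theorem sum_mul_div_sum_self {ι : Type*} (s : Finset ι) (w : ι → ℝ) (c : ℝ)
    (hw : ∑ j ∈ s, w j ≠ 0) : ∑ i ∈ s, c * w i / ∑ j ∈ s, w j = c := by
  rw [← sum_div, ← mul_sum, mul_div_assoc, div_self hw, mul_one]

section Threshold

variable {h : ℕ → ℝ} {m : ℕ} {c : ℝ}

theorem lt_sum_div_of_mul_lt (hc : 0 < c) (hlt : c * h m < ∑ i ∈ Icc 1 m, h i) :
    h m < (∑ i ∈ Icc 1 m, h i) / c := by
  rwa [lt_div_iff₀ hc, mul_comm]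

theorem sum_div_le_of_not_mul_lt (hc : 0 < c)
    (hge : ¬ (c + 1) * h (m + 1) < ∑ i ∈ Icc 1 (m + 1), h i) :
    (∑ i ∈ Icc 1 m, h i) / c ≤ h (m + 1) := by
  rw [sum_Icc_succ_top (Nat.le_add_left 1 m), not_lt] at hge
  rw [div_le_iff₀ hc]
  linarith

end Threshold

theorem stmt_1_general (n r k : ℕ) (hrn : r ≤ n)
    (h : ℕ → ℝ)
    (hpos : ∀ i ∈ Finset.Icc 1 n, 0 < h i)
    (hmono : ∀ i j, 1 ≤ i → i ≤ j → j ≤ n → h i ≤ h j)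
    (hkr : k < r)
    (hk : ((r : ℝ) - k) * h (n - k) < ∑ i ∈ Finset.Icc 1 (n - k), h i)
    (hkmin : ∀ s : ℕ, s < k →
      ¬ (((r : ℝ) - s) * h (n - s) < ∑ i ∈ Finset.Icc 1 (n - s), h i))
    (M : ℝ) (hM : M = (∑ i ∈ Finset.Icc 1 (n - k), h i) / ((r : ℝ) - k))
    (π : ℕ → ℝ)
    (hπ : ∀ i, π i = (r : ℝ) * min (h i) M / ∑ j ∈ Finset.Icc 1 n, min (h j) M) :
    h (n - k) < M ∧ (k = 0 ∨ M ≤ h (n - k + 1)) ∧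
      (∀ i ∈ Finset.Icc 1 n, 0 < π i ∧ π i ≤ 1) ∧
      ∑ i ∈ Finset.Icc 1 n, π i = (r : ℝ) := by
  have hrk : (0 : ℝ) < r - k := sub_pos.mpr (by exact_mod_cast hkr)
  have hr : (0 : ℝ) < r := Nat.cast_pos.mpr (k.zero_le.trans_lt hkr)
  have hlt : h (n - k) < M := hM ▸ lt_sum_div_of_mul_lt hrk hk
  have hle : k = 0 ∨ M ≤ h (n - k + 1) := by
    rcases Nat.eq_zero_or_pos k with hk0 | hk0
    · exact .inl hk0
    refine .inr (hM ▸ sum_div_le_of_not_mul_lt hrk ?_)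
    have := hkmin (k - 1) (by omega)
    rwa [show n - (k - 1) = n - k + 1 by omega, Nat.cast_pred hk0,
      sub_sub_eq_add_sub, add_sub_right_comm] at this
  have hMpos : 0 < M := (hpos (n - k) (mem_Icc.mpr ⟨by omega, by omega⟩)).trans hlt
  have hlow : ∀ i ∈ Icc 1 (n - k), h i ≤ M := fun i hi =>
    (hmono i _ (mem_Icc.mp hi).1 (mem_Icc.mp hi).2 (by omega)).trans hlt.le
  have hhigh : ∀ i ∈ Icc (n - k + 1) n, M ≤ h i := fun i hi => by
    obtain ⟨hi₁, hi₂⟩ := mem_Icc.mp hi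
    exact (hle.resolve_left (by omega)).trans (hmono _ i (by omega) hi₁ hi₂)
  have hT : ∑ j ∈ Icc 1 n, min (h j) M = r * M := by
    rw [sum_Icc_min_eq_of_le_of_ge (by omega) hlow hhigh, Nat.sub_sub_self (by omega), hM]
    field_simp
    ring
  have hTpos : 0 < ∑ j ∈ Icc 1 n, min (h j) M := hT ▸ mul_pos hr hMpos
  refine ⟨hlt, hle, fun i hi => ?_, ?_⟩
  · rw [hπ i]
    refine ⟨div_pos (mul_pos hr (lt_min (hpos i hi) hMpos)) hTpos, ?_⟩
    rw [div_le_one hTpos, hT]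
    exact mul_le_mul_of_nonneg_left (min_le_right _ _) hr.le
  · simp_rw [hπ]
    exact sum_mul_div_sum_self _ _ _ hTpos.ne'

/-- Construction of the threshold `M` in the optimal subsampling probabilities:
with `k` the least `s ≤ r` such that `(r-s) h (n-s) < ∑_{i=1}^{n-s} h i` and
`M = (∑_{i=1}^{n-k} h i) / (r-k)`, one has `h (n-k) < M ≤ h (n-k+1)` (the upper
bound read as vacuous when `k = 0`, i.e. `h (n+1) = ∞`), and the probabilities
`π i = r (h i ⊓ M) / ∑ j (h j ⊓ M)` lie in `(0,1]` and sum to `r`. -/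
theorem stmt_1 (n r k : ℕ) (hr : 0 < r) (hrn : r ≤ n)
    (h : ℕ → ℝ)
    (hpos : ∀ i ∈ Finset.Icc 1 n, 0 < h i)
    (hmono : ∀ i j, 1 ≤ i → i ≤ j → j ≤ n → h i ≤ h j)
    (hkr : k < r)
    (hk : ((r : ℝ) - k) * h (n - k) < ∑ i ∈ Finset.Icc 1 (n - k), h i)
    (hkmin : ∀ s : ℕ, s < k →
      ¬ (((r : ℝ) - s) * h (n - s) < ∑ i ∈ Finset.Icc 1 (n - s), h i))
    (M : ℝ) (hM : M = (∑ i ∈ Finset.Icc 1 (n - k), h i) / ((r : ℝ) - k))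
    (π : ℕ → ℝ)
    (hπ : ∀ i, π i = (r : ℝ) * min (h i) M / ∑ j ∈ Finset.Icc 1 n, min (h j) M) :
    h (n - k) < M ∧ (k = 0 ∨ M ≤ h (n - k + 1)) ∧
      (∀ i ∈ Finset.Icc 1 n, 0 < π i ∧ π i ≤ 1) ∧
      ∑ i ∈ Finset.Icc 1 n, π i = (r : ℝ) :=
  stmt_1_general n r k hrn h hpos hmono hkr hk hkmin M hM π hπ
end

section
/- Let $h_1 \le \cdots \le h_n$ be positive reals. The function $M \mapsto \frac{h_n \wedge M}{\sum_{j=1}^n (h_j \wedge M)}$ is nondecreasing in $M$ on the interval $(h_1, h_n)$. -/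
open Finset

/-- Monotonicity of `M ↦ (h n ⊓ M) / ∑ j (h j ⊓ M)` on `(h 1, h n)` for a
nondecreasing positive sequence `h 1 ≤ ⋯ ≤ h n`. -/
theorem stmt_2 (n : ℕ) (hn : 1 ≤ n) (h : ℕ → ℝ)
    (hpos : ∀ i ∈ Finset.Icc 1 n, 0 < h i)
    (hmono : ∀ i j, 1 ≤ i → i ≤ j → j ≤ n → h i ≤ h j)
    (M₁ M₂ : ℝ) (h1 : h 1 < M₁) (h12 : M₁ ≤ M₂) (h2 : M₂ < h n) :
    min (h n) M₁ / ∑ j ∈ Finset.Icc 1 n, min (h j) M₁ ≤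
      min (h n) M₂ / ∑ j ∈ Finset.Icc 1 n, min (h j) M₂ := by
  have h1mem : (1 : ℕ) ∈ Finset.Icc 1 n := by simp [hn]
  have h1pos : 0 < h 1 := hpos 1 h1mem
  have hM1 : 0 < M₁ := h1pos.trans h1
  have hM2 : 0 < M₂ := hM1.trans_le h12
  have hne : (Finset.Icc 1 n).Nonempty := ⟨1, h1mem⟩
  have hS1 : 0 < ∑ j ∈ Finset.Icc 1 n, min (h j) M₁ :=
    Finset.sum_pos (fun i hi => lt_min (hpos i hi) hM1) hne
  have hS2 : 0 < ∑ j ∈ Finset.Icc 1 n, min (h j) M₂ :=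
    Finset.sum_pos (fun i hi => lt_min (hpos i hi) hM2) hne
  rw [min_eq_right (le_of_lt (h12.trans_lt h2)), min_eq_right (le_of_lt h2),
    div_le_div_iff₀ hS1 hS2, Finset.mul_sum, Finset.mul_sum]
  refine Finset.sum_le_sum fun i hi => ?_
  rcases le_total (h i) M₁ with hc | hc
  · rw [min_eq_left hc, min_eq_left (hc.trans h12)]
    nlinarith [(hpos i hi).le]
  · rw [min_eq_right hc]
    rcases le_total (h i) M₂ with hd | hd
    · rw [min_eq_left hd]
      nlinarith
    · rw [min_eq_right hd]
      nlinarith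
end

section
/- Let $h_1 \le \cdots \le h_n$ be positive reals, $r \le n$ a positive integer, and $k \in \{0, \ldots, r\}$ with $(r-k) h_{n-k} < \sum_{i=1}^{n-k} h_i$. Over probabilities with $\pi_i = 1$ for $i > n-k$, $0 < \pi_i \le 1$ for $i \le n-k$, and $\sum_{i=1}^{n-k} \pi_i = r - k$, the minimum of $\sum_{i=1}^{n-k} h_i^2/\pi_i$ equals $\frac{1}{r-k}\left(\sum_{i=1}^{n-k} h_i\right)^2$, attained at $\pi_i = (r-k) h_i / \sum_{j=1}^{n-k} h_j$, and these optimal values satisfy $\pi_i \le 1$. -/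
open Finset

/-- Constrained optimization after fixing the `k` largest probabilities to one:
the minimum of `∑_{i ≤ n-k} h i ^ 2 / π i` over probabilities `π` with
`π i = 1` for `i > n-k`, `0 < π i ≤ 1`, and `∑_{i ≤ n-k} π i = r - k`, equals
`(∑_{i ≤ n-k} h i)^2 / (r-k)`, attained at `π i = (r-k) h i / ∑_{j ≤ n-k} h j`,
and these optimal values lie in `(0,1]`. -/
theorem stmt_3 (n r k : ℕ) (hr : 0 < r) (hrn : r ≤ n) (hkr : k < r)
    (h : ℕ → ℝ)
    (hpos : ∀ i ∈ Finset.Icc 1 n, 0 < h i)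
    (hmono : ∀ i j, 1 ≤ i → i ≤ j → j ≤ n → h i ≤ h j)
    (hk : ((r : ℝ) - k) * h (n - k) < ∑ i ∈ Finset.Icc 1 (n - k), h i) :
    (∀ π : ℕ → ℝ,
        (∀ i ∈ Finset.Icc 1 n, n - k < i → π i = 1) →
        (∀ i ∈ Finset.Icc 1 (n - k), 0 < π i ∧ π i ≤ 1) →
        (∑ i ∈ Finset.Icc 1 (n - k), π i = (r : ℝ) - k) →
        (1 / ((r : ℝ) - k)) * (∑ i ∈ Finset.Icc 1 (n - k), h i) ^ 2 ≤
          ∑ i ∈ Finset.Icc 1 (n - k), (h i) ^ 2 / π i) ∧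
    (∀ i ∈ Finset.Icc 1 (n - k),
        0 < ((r : ℝ) - k) * h i / ∑ j ∈ Finset.Icc 1 (n - k), h j ∧
        ((r : ℝ) - k) * h i / ∑ j ∈ Finset.Icc 1 (n - k), h j ≤ 1) ∧
    (∑ i ∈ Finset.Icc 1 (n - k),
        (h i) ^ 2 / (((r : ℝ) - k) * h i / ∑ j ∈ Finset.Icc 1 (n - k), h j) =
      (1 / ((r : ℝ) - k)) * (∑ i ∈ Finset.Icc 1 (n - k), h i) ^ 2) := by
  have hrk : (0:ℝ) < (r:ℝ) - k := by
    have : (k:ℝ) < r := by exact_mod_cast hkr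
    linarith
  have hnk1 : 1 ≤ n - k := by omega
  have hmem : ∀ i ∈ Finset.Icc 1 (n - k), i ∈ Finset.Icc 1 n := by
    intro i hi
    simp only [Finset.mem_Icc] at *
    omega
  have hposk : ∀ i ∈ Finset.Icc 1 (n - k), 0 < h i := fun i hi => hpos i (hmem i hi)
  have hS : 0 < ∑ i ∈ Finset.Icc 1 (n - k), h i := by
    apply Finset.sum_pos hposk
    exact ⟨1, by simp [hnk1]⟩
  set S := ∑ i ∈ Finset.Icc 1 (n - k), h i with hSdef
  refine ⟨?_, ?_, ?_⟩
  · intro π _ hbd hsum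
    have hπpos : ∀ i ∈ Finset.Icc 1 (n - k), 0 < π i := fun i hi => (hbd i hi).1
    have key : S ^ 2 ≤ (∑ i ∈ Finset.Icc 1 (n - k), π i) *
        (∑ i ∈ Finset.Icc 1 (n - k), (h i) ^ 2 / π i) := by
      have := Finset.sum_mul_sq_le_sq_mul_sq (Finset.Icc 1 (n - k))
        (fun i => Real.sqrt (π i)) (fun i => h i / Real.sqrt (π i))
      have h1 : ∑ i ∈ Finset.Icc 1 (n - k),
          Real.sqrt (π i) * (h i / Real.sqrt (π i)) = S := by
        apply Finset.sum_congr rfl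
        intro i hi
        have : Real.sqrt (π i) ≠ 0 := ne_of_gt (Real.sqrt_pos.mpr (hπpos i hi))
        field_simp
      have h2 : ∑ i ∈ Finset.Icc 1 (n - k), Real.sqrt (π i) ^ 2 =
          ∑ i ∈ Finset.Icc 1 (n - k), π i := by
        apply Finset.sum_congr rfl
        intro i hi
        exact Real.sq_sqrt (hπpos i hi).le
      have h3 : ∑ i ∈ Finset.Icc 1 (n - k), (h i / Real.sqrt (π i)) ^ 2 =
          ∑ i ∈ Finset.Icc 1 (n - k), (h i) ^ 2 / π i := by
        apply Finset.sum_congr rfl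
        intro i hi
        rw [div_pow, Real.sq_sqrt (hπpos i hi).le]
      rw [h1, h2, h3] at this
      exact this
    rw [hsum] at key
    rw [one_div, inv_mul_le_iff₀ hrk]
    exact key
  · intro i hi
    have h1 : 0 < h i := hposk i hi
    have h2 : h i ≤ h (n - k) := by
      simp only [Finset.mem_Icc] at hi
      exact hmono i (n - k) hi.1 hi.2 (by omega)
    constructor
    · positivity
    · rw [div_le_one hS]
      calc ((r:ℝ) - k) * h i ≤ ((r:ℝ) - k) * h (n - k) := by nlinarith
        _ ≤ S := hk.le
  · have : ∀ i ∈ Finset.Icc 1 (n - k),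
        (h i) ^ 2 / (((r:ℝ) - k) * h i / S) = h i * S * (1 / ((r:ℝ) - k)) := by
      intro i hi
      have h1 : h i ≠ 0 := ne_of_gt (hposk i hi)
      field_simp
    rw [Finset.sum_congr rfl this, ← Finset.sum_mul, ← Finset.sum_mul]
    ring
end

section
/- Let $h_1, \ldots, h_n$ be positive reals and $r$ a positive integer. For subsampling probabilities of the form $\pi_i = r g_i / \sum_j g_j$ with positive weights $g_i$ summing appropriately, the quantity $\sum_{i=1}^n \frac{1-\pi_i}{\pi_i} h_i^2$ is minimized over the choice of weights $(g_i)$ when $g_i \propto h_i$, in which case it equals $\frac{1}{r}\left(\sum_{i=1}^n h_i\right)^2 - \sum_{i=1}^n h_i^2$. -/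
open Finset

lemma stmt6_aux (n r : ℕ) (hr : 0 < r) (h : Fin n → ℝ) (hpos : ∀ i, 0 < h i)
    (g : Fin n → ℝ) (hg : ∀ i, 0 < g i)
    (π : Fin n → ℝ) (hπ : ∀ i, π i = (r : ℝ) * g i / ∑ j, g j) :
    ∑ i, (1 - π i) / π i * (h i) ^ 2 =
      ((∑ j, g j) / r) * (∑ i, (h i) ^ 2 / g i) - ∑ i, (h i) ^ 2 := by
  rcases Nat.eq_zero_or_pos n with hn | hn
  · subst hn; simp
  have hne : (Finset.univ : Finset (Fin n)).Nonempty := by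
    simpa [Finset.univ_nonempty_iff] using Fin.pos_iff_nonempty.mp hn
  have hS : 0 < ∑ j, g j := Finset.sum_pos (fun i _ => hg i) hne
  have hrr : (0:ℝ) < r := by exact_mod_cast hr
  have key : ∀ i, (1 - π i) / π i * (h i) ^ 2
      = ((∑ j, g j) / r) * ((h i)^2 / g i) - (h i)^2 := by
    intro i
    rw [hπ i]
    have := (hg i).ne'
    field_simp
  rw [Finset.sum_congr rfl (fun i _ => key i), Finset.sum_sub_distrib,
    ← Finset.mul_sum]

/-- Among subsampling probabilities of the form `π i = r g i / ∑ j g j` with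
positive weights `g`, the quantity `∑ (1-π i)/π i * h i ^ 2` is minimized when
`g` is proportional to `h`, where it equals `(1/r) (∑ h i)^2 - ∑ h i ^ 2`. -/
theorem stmt_6 (n r : ℕ) (hr : 0 < r)
    (h : Fin n → ℝ) (hpos : ∀ i, 0 < h i) :
    (∀ g : Fin n → ℝ, (∀ i, 0 < g i) →
      ∀ π : Fin n → ℝ, (∀ i, π i = (r : ℝ) * g i / ∑ j, g j) →
        (1 / (r : ℝ)) * (∑ i, h i) ^ 2 - ∑ i, (h i) ^ 2 ≤
          ∑ i, (1 - π i) / π i * (h i) ^ 2) ∧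
    (∀ g : Fin n → ℝ, (∀ i, 0 < g i) → (∃ c : ℝ, 0 < c ∧ ∀ i, g i = c * h i) →
      ∀ π : Fin n → ℝ, (∀ i, π i = (r : ℝ) * g i / ∑ j, g j) →
        ∑ i, (1 - π i) / π i * (h i) ^ 2 =
          (1 / (r : ℝ)) * (∑ i, h i) ^ 2 - ∑ i, (h i) ^ 2) := by
  have hrr : (0:ℝ) < r := by exact_mod_cast hr
  constructor
  · intro g hg π hπ
    rw [stmt6_aux n r hr h hpos g hg π hπ]
    rcases Nat.eq_zero_or_pos n with hn | hn
    · subst hn; simp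
    have hne : (Finset.univ : Finset (Fin n)).Nonempty := by
      simpa [Finset.univ_nonempty_iff] using Fin.pos_iff_nonempty.mp hn
    have hS : 0 < ∑ j, g j := Finset.sum_pos (fun i _ => hg i) hne
    have cs : (∑ i, h i) ^ 2 ≤ (∑ j, g j) * (∑ i, (h i)^2 / g i) := by
      have cs' := Finset.sq_sum_div_le_sum_sq_div Finset.univ h (fun i _ => hg i)
      calc (∑ i, h i) ^ 2 = ((∑ i, h i) ^ 2 / ∑ j, g j) * ∑ j, g j := by
            field_simp
        _ ≤ (∑ i, (h i)^2 / g i) * ∑ j, g j := by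
            exact mul_le_mul_of_nonneg_right cs' hS.le
        _ = (∑ j, g j) * (∑ i, (h i)^2 / g i) := by ring
    have hinv : (0:ℝ) < 1 / (r:ℝ) := by positivity
    have := mul_le_mul_of_nonneg_left cs hinv.le
    have heq : (1 / (r:ℝ)) * ((∑ j, g j) * (∑ i, (h i)^2 / g i))
        = ((∑ j, g j) / r) * (∑ i, (h i)^2 / g i) := by ring
    linarith [this, heq ▸ this]
  · rintro g hg ⟨c, hc, hgc⟩ π hπ
    rw [stmt6_aux n r hr h hpos g hg π hπ]
    have e1 : ∑ j, g j = c * ∑ i, h i := by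
      rw [Finset.mul_sum]; exact Finset.sum_congr rfl (fun i _ => hgc i)
    have e2 : ∑ i, (h i)^2 / g i = (1/c) * ∑ i, h i := by
      rw [Finset.mul_sum]
      refine Finset.sum_congr rfl (fun i _ => ?_)
      rw [hgc i]
      have := (hpos i).ne'
      field_simp
    rw [e1, e2]
    field_simp
end

section
/- Let $c_i \ge 0$ and $v_i \in \mathbb{R}^q$ for $i = 1, \ldots, n$, let $\mathbf{J}$ be symmetric positive definite, and let $\pi_i \in (0,1]$ with $\sum_{i=1}^n \pi_i = r$. Then $\mathrm{tr}\left(\mathbf{J}^{-1}\left[\sum_{i=1}^n \frac{c_i^2}{\pi_i} v_i v_i^T\right] \mathbf{J}^{-1}\right) \ge \frac{1}{r}\left[\sum_{i=1}^n c_i \left(v_i^T \mathbf{J}^{-2} v_i\right)^{1/2}\right]^2$, with equality if $\pi_i$ is proportional to $c_i (v_i^T \mathbf{J}^{-2} v_i)^{1/2}$. -/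
open Matrix Finset

lemma trace_sandwich' {q : ℕ} (A : Matrix (Fin q) (Fin q) ℝ) (u : Fin q → ℝ) :
    Matrix.trace (A * Matrix.vecMulVec u u * A) = u ⬝ᵥ (A * A) *ᵥ u := by
  simp only [Matrix.trace, Matrix.diag, Matrix.mul_apply, Matrix.vecMulVec_apply,
    dotProduct, Matrix.mulVec, Finset.sum_mul, Finset.mul_sum]
  rw [Finset.sum_comm]
  refine Finset.sum_congr rfl fun k _ => ?_
  rw [Finset.sum_comm]
  refine Finset.sum_congr rfl fun j _ => ?_
  refine Finset.sum_congr rfl fun i _ => ?_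
  ring

lemma quad_nonneg' {q : ℕ} (A : Matrix (Fin q) (Fin q) ℝ) (hA : Aᵀ = A) (u : Fin q → ℝ) :
    0 ≤ u ⬝ᵥ (A * A) *ᵥ u := by
  rw [← Matrix.mulVec_mulVec, Matrix.dotProduct_mulVec]
  nth_rewrite 1 [← hA]
  rw [Matrix.vecMul_transpose]
  exact Finset.sum_nonneg fun i _ => mul_self_nonneg _

lemma cs_aux {n : ℕ} (rr : ℝ) (hr : 0 < rr) (c w π : Fin n → ℝ)
    (hc : ∀ i, 0 ≤ c i) (hw : ∀ i, 0 ≤ w i) (hπ : ∀ i, 0 < π i)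
    (hsum : ∑ i, π i = rr) :
    (1 / rr) * (∑ i, c i * Real.sqrt (w i)) ^ 2 ≤ ∑ i, (c i ^ 2 / π i) * w i ∧
      ((∃ t : ℝ, ∀ i, π i = t * (c i * Real.sqrt (w i))) →
        ∑ i, (c i ^ 2 / π i) * w i = (1 / rr) * (∑ i, c i * Real.sqrt (w i)) ^ 2) := by
  constructor
  · have key : (∑ i, c i * Real.sqrt (w i)) ^ 2 ≤
        (∑ i, (c i ^ 2 / π i) * w i) * ∑ i, π i := by
      refine Finset.sum_sq_le_sum_mul_sum_of_sq_eq_mul _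
        (fun i _ => mul_nonneg (div_nonneg (sq_nonneg _) (hπ i).le) (hw i))
        (fun i _ => (hπ i).le) (fun i _ => ?_)
      rw [mul_pow, Real.sq_sqrt (hw i), div_mul_eq_mul_div, div_mul_eq_mul_div,
        mul_div_assoc, div_self (hπ i).ne', mul_one]
    rw [hsum] at key
    rw [one_div, inv_mul_le_iff₀ hr, mul_comm]
    exact key
  · rintro ⟨t, ht⟩
    have hn : 0 < n := by
      rcases Nat.eq_zero_or_pos n with h | h
      · exfalso
        subst h
        rw [Finset.univ_eq_empty, Finset.sum_empty] at hsum
        exact hr.ne' hsum.symm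
      · exact h
    have hcs : ∀ i, 0 < c i * Real.sqrt (w i) := by
      intro i
      have h := hπ i
      rw [ht i] at h
      rcases mul_pos_iff.mp h with ⟨_, h2⟩ | ⟨_, h2⟩
      · exact h2
      · exact absurd h2 (not_lt.mpr (mul_nonneg (hc i) (Real.sqrt_nonneg _)))
    have htpos : 0 < t := by
      have h := hπ ⟨0, hn⟩
      rw [ht ⟨0, hn⟩] at h
      rcases mul_pos_iff.mp h with ⟨h1, _⟩ | ⟨_, h2⟩
      · exact h1
      · exact absurd h2 (not_lt.mpr (mul_nonneg (hc _) (Real.sqrt_nonneg _)))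
    have hSpos : 0 < ∑ i, c i * Real.sqrt (w i) :=
      Finset.sum_pos (fun i _ => hcs i) (Finset.univ_nonempty_iff.mpr ⟨⟨0, hn⟩⟩)
    have hrS : rr = t * ∑ i, c i * Real.sqrt (w i) := by
      rw [← hsum, Finset.mul_sum]
      exact Finset.sum_congr rfl fun i _ => ht i
    have hterm : ∀ i, (c i ^ 2 / π i) * w i = (c i * Real.sqrt (w i)) / t := by
      intro i
      have hci : c i ≠ 0 := by
        rcases mul_pos_iff.mp (hcs i) with ⟨a, _⟩ | ⟨_, b⟩
        · exact a.ne'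
        · exact absurd b (not_lt.mpr (Real.sqrt_nonneg _))
      obtain ⟨b, hbpos, hb⟩ : ∃ b : ℝ, 0 ≤ b ∧ b ^ 2 = w i :=
        ⟨Real.sqrt (w i), Real.sqrt_nonneg _, Real.sq_sqrt (hw i)⟩
      have hbne : b ≠ 0 := by
        intro h
        have := hcs i
        rw [← hb, h] at this
        simp at this
      rw [ht i, ← hb, Real.sqrt_sq hbpos]
      field_simp
    calc (∑ i, (c i ^ 2 / π i) * w i)
        = (∑ i, c i * Real.sqrt (w i)) / t := by
          rw [Finset.sum_congr rfl fun i _ => hterm i, Finset.sum_div]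
      _ = (1 / rr) * (∑ i, c i * Real.sqrt (w i)) ^ 2 := by
          rw [hrS]
          field_simp

/-- mV-optimality (Theorem 2 core inequality): for probabilities `π i ∈ (0,1]`
with `∑ π i = r`,
`tr(J⁻¹ (∑ c i ²/π i · v i v iᵀ) J⁻¹) ≥ (1/r) (∑ c i √(v iᵀ J⁻² v i))²`,
with equality when `π` is proportional to `c i √(v iᵀ J⁻² v i)`. -/
theorem stmt_12 (q n : ℕ) (r : ℕ) (hr : 0 < r)
    (J : Matrix (Fin q) (Fin q) ℝ) (hJ : J.PosDef)
    (c : Fin n → ℝ) (hc : ∀ i, 0 ≤ c i) (v : Fin n → Fin q → ℝ)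
    (π : Fin n → ℝ) (hπ : ∀ i, 0 < π i ∧ π i ≤ 1)
    (hsum : ∑ i, π i = (r : ℝ)) :
    (1 / (r : ℝ)) * (∑ i, c i * Real.sqrt (v i ⬝ᵥ (J⁻¹ * J⁻¹) *ᵥ v i)) ^ 2 ≤
        Matrix.trace (J⁻¹ * (∑ i, ((c i) ^ 2 / π i) • Matrix.vecMulVec (v i) (v i)) * J⁻¹) ∧
      ((∃ t : ℝ, ∀ i, π i = t * (c i * Real.sqrt (v i ⬝ᵥ (J⁻¹ * J⁻¹) *ᵥ v i))) →
        Matrix.trace (J⁻¹ * (∑ i, ((c i) ^ 2 / π i) • Matrix.vecMulVec (v i) (v i)) * J⁻¹) =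
          (1 / (r : ℝ)) * (∑ i, c i * Real.sqrt (v i ⬝ᵥ (J⁻¹ * J⁻¹) *ᵥ v i)) ^ 2) := by
  have hJt : (J⁻¹)ᵀ = J⁻¹ := by
    rw [Matrix.transpose_nonsing_inv]
    congr 1
    simpa using hJ.isHermitian.eq
  have hQ : ∀ i, 0 ≤ v i ⬝ᵥ (J⁻¹ * J⁻¹) *ᵥ v i := fun i => quad_nonneg' _ hJt _
  have hrpos : (0:ℝ) < (r:ℝ) := by exact_mod_cast hr
  have htr : Matrix.trace (J⁻¹ * (∑ i, ((c i) ^ 2 / π i) • Matrix.vecMulVec (v i) (v i)) * J⁻¹)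
      = ∑ i, (c i ^ 2 / π i) * (v i ⬝ᵥ (J⁻¹ * J⁻¹) *ᵥ v i) := by
    rw [Finset.mul_sum, Finset.sum_mul, Matrix.trace_sum]
    refine Finset.sum_congr rfl fun i _ => ?_
    rw [Matrix.mul_smul, Matrix.smul_mul, Matrix.trace_smul, trace_sandwich']
    simp [smul_eq_mul]
  rw [htr]
  exact cs_aux (r : ℝ) hrpos c _ π hc hQ (fun i => (hπ i).1) hsum
end

section
/- Let $c_i \ge 0$ and $v_i \in \mathbb{R}^q$ for $i = 1, \ldots, n$, and $\pi_i \in (0,1]$ with $\sum_{i=1}^n \pi_i = r$. Then $\mathrm{tr}\left(\sum_{i=1}^n \frac{c_i^2}{\pi_i} v_i v_i^T\right) = \sum_{i=1}^n \frac{c_i^2 \|v_i\|^2}{\pi_i} \ge \frac{1}{r}\left(\sum_{i=1}^n c_i \|v_i\|\right)^2$, with equality when $\pi_i \propto c_i \|v_i\|$. -/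
open Matrix Finset

theorem Matrix.trace_sum_smul_vecMulVec {ι m R : Type*} [Fintype m] [CommSemiring R]
    (s : Finset ι) (w : ι → R) (u v : ι → m → R) :
    trace (∑ i ∈ s, w i • vecMulVec (u i) (v i)) = ∑ i ∈ s, w i * (u i ⬝ᵥ v i) := by
  simp only [trace_sum, trace_smul, trace_vecMulVec, smul_eq_mul]

theorem Matrix.sq_mul_sqrt_dotProduct_self {m : Type*} [Fintype m] (c : ℝ) (v : m → ℝ) :
    (c * √(v ⬝ᵥ v)) ^ 2 = c ^ 2 * (v ⬝ᵥ v) := by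
  rw [mul_pow, Real.sq_sqrt (by simpa using dotProduct_self_star_nonneg v)]

/-- Equality case of `Finset.sq_sum_div_le_sum_sq_div`. No positivity is needed: when `t = 0` or
`∑ f = 0` both sides are `0` under the convention `x / 0 = 0`. -/
theorem Finset.sum_sq_div_eq_sq_sum_div_of_eq_mul {ι K : Type*} [Field K] (s : Finset ι)
    (f g : ι → K) (t : K) (hg : ∀ i ∈ s, g i = t * f i) :
    ∑ i ∈ s, f i ^ 2 / g i = (∑ i ∈ s, f i) ^ 2 / ∑ i ∈ s, g i := by
  have hterm : ∀ i ∈ s, f i ^ 2 / g i = f i / t := by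
    intro i hi
    rw [hg i hi]
    rcases eq_or_ne (f i) 0 with hf | hf
    · simp [hf]
    · rw [sq, mul_comm t, mul_div_mul_left _ _ hf]
  rw [sum_congr rfl hterm, ← sum_div, sum_congr rfl hg, ← mul_sum]
  rcases eq_or_ne (∑ i ∈ s, f i) 0 with hS | hS
  · simp [hS]
  · rw [sq, mul_comm t, mul_div_mul_left _ _ hS]

theorem stmt_13_general (q n : ℕ) (r : ℕ)
    (c : Fin n → ℝ) (v : Fin n → Fin q → ℝ)
    (π : Fin n → ℝ) (hπ : ∀ i, 0 < π i ∧ π i ≤ 1)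
    (hsum : ∑ i, π i = (r : ℝ)) :
    Matrix.trace (∑ i, ((c i) ^ 2 / π i) • Matrix.vecMulVec (v i) (v i)) =
        ∑ i, (c i) ^ 2 * (v i ⬝ᵥ v i) / π i ∧
      (1 / (r : ℝ)) * (∑ i, c i * Real.sqrt (v i ⬝ᵥ v i)) ^ 2 ≤
        ∑ i, (c i) ^ 2 * (v i ⬝ᵥ v i) / π i ∧
      ((∃ t : ℝ, ∀ i, π i = t * (c i * Real.sqrt (v i ⬝ᵥ v i))) →
        ∑ i, (c i) ^ 2 * (v i ⬝ᵥ v i) / π i =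
          (1 / (r : ℝ)) * (∑ i, c i * Real.sqrt (v i ⬝ᵥ v i)) ^ 2) := by
  have hsq (i : Fin n) := sq_mul_sqrt_dotProduct_self (c i) (v i)
  have hlhs : (1 / (r : ℝ)) * (∑ i, c i * √(v i ⬝ᵥ v i)) ^ 2 =
      (∑ i, c i * √(v i ⬝ᵥ v i)) ^ 2 / ∑ i, π i := by
    rw [hsum, one_div_mul_eq_div]
  simp only [← hsq, hlhs]
  refine ⟨?_, sq_sum_div_le_sum_sq_div _ _ fun i _ => (hπ i).1, ?_⟩
  · rw [trace_sum_smul_vecMulVec]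
    exact sum_congr rfl fun i _ => by rw [hsq, div_mul_eq_mul_div]
  · rintro ⟨t, ht⟩
    exact sum_sq_div_eq_sq_sum_div_of_eq_mul _ _ _ t fun i _ => ht i

/-- mVc (L-optimality) criterion of Theorem 3: for probabilities `π i ∈ (0,1]`
with `∑ π i = r`, `tr(∑ c i ²/π i · v i v iᵀ) = ∑ c i ² ‖v i‖² / π i
≥ (1/r)(∑ c i ‖v i‖)²`, with equality when `π i ∝ c i ‖v i‖`. -/
theorem stmt_13 (q n : ℕ) (r : ℕ) (hr : 0 < r)
    (c : Fin n → ℝ) (hc : ∀ i, 0 ≤ c i) (v : Fin n → Fin q → ℝ)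
    (π : Fin n → ℝ) (hπ : ∀ i, 0 < π i ∧ π i ≤ 1)
    (hsum : ∑ i, π i = (r : ℝ)) :
    Matrix.trace (∑ i, ((c i) ^ 2 / π i) • Matrix.vecMulVec (v i) (v i)) =
        ∑ i, (c i) ^ 2 * (v i ⬝ᵥ v i) / π i ∧
      (1 / (r : ℝ)) * (∑ i, c i * Real.sqrt (v i ⬝ᵥ v i)) ^ 2 ≤
        ∑ i, (c i) ^ 2 * (v i ⬝ᵥ v i) / π i ∧
      ((∃ t : ℝ, ∀ i, π i = t * (c i * Real.sqrt (v i ⬝ᵥ v i))) →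
        ∑ i, (c i) ^ 2 * (v i ⬝ᵥ v i) / π i =
          (1 / (r : ℝ)) * (∑ i, c i * Real.sqrt (v i ⬝ᵥ v i)) ^ 2) :=
  stmt_13_general q n r c v π hπ hsum
end
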